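/- Let A be a unital C*-algebra with tracial states τ and ρ, and suppose both τ and ρ arise as weak* limits of normalized matrix traces along topological-distribution-convergent microstate sequences for a fixed generating tuple (x₁,…,x_n) (i.e., τ, ρ ∈ T_MF(A)). Then for every rational number q ∈ [0,1], q·τ + (1−q)·ρ ∈ T_MF(A). -/

import Mathlib

/-!
Let `X k`, `Y k` be microstates for `τ`, `ρ` of sizes `m₁ k`, `m₂ k`, and `q = u / (u + w)`.
The map `P ↦ diag(P.1 ⊗ 1_{m₂}, …, P.1 ⊗ 1_{m₂}, 1_{m₁} ⊗ P.2, …, 1_{m₁} ⊗ P.2)`, with `u`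
blocks of the first kind and `w` of the second, is an injective *-homomorphism
`M_{m₁} × M_{m₂} → M_{m₁ m₂ (u + w)}`, hence isometric, so the images of `(X k, Y k)` have
`‖p‖ = max ‖p(X k)‖ ‖p(Y k)‖ → ‖p(x)‖`. Since all blocks have the same size `m₁ m₂`, the
normalized trace of the image is `q · tr(p(X k))/m₁ + (1 - q) · tr(p(Y k))/m₂`.
Injectivity needs `u, w > 0`, which is why `q = 0` and `q = 1` are treated separately.
-/

open scoped Matrix.Norms.L2Operator

/-- Evaluation of a noncommutative *-polynomial at a tuple. -/
noncomputable def evalStarPoly {A : Type*} [Ring A] [Algebra ℂ A] [StarRing A]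
    {n : ℕ} (x : Fin n → A) (p : FreeAlgebra ℂ (Fin n × Bool)) : A :=
  FreeAlgebra.lift ℂ (fun q : Fin n × Bool => if q.2 then star (x q.1) else x q.1) p

/-- The MF-trace condition for `τ` relative to a generating tuple `x`. -/
def IsMFTrace {A : Type*} [NormedRing A] [StarRing A] [CStarRing A] [NormedAlgebra ℂ A]
    {n : ℕ} (x : Fin n → A) (τ : A → ℂ) : Prop :=
  ∃ m : ℕ → ℕ, (∀ k, 0 < m k) ∧
    ∃ Amat : (k : ℕ) → Fin n → Matrix (Fin (m k)) (Fin (m k)) ℂ,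
      ∀ p : FreeAlgebra ℂ (Fin n × Bool),
        Filter.Tendsto (fun k => ‖evalStarPoly (Amat k) p‖) Filter.atTop
          (nhds ‖evalStarPoly x p‖) ∧
        Filter.Tendsto (fun k => Matrix.trace (evalStarPoly (Amat k) p) / (m k : ℂ))
          Filter.atTop (nhds (τ (evalStarPoly x p)))

open scoped Kronecker

section evalStarPoly

variable {A B : Type*} [Ring A] [Algebra ℂ A] [StarRing A] [Ring B] [Algebra ℂ B] [StarRing B]
  {n : ℕ}

lemma map_evalStarPoly (f : A →⋆ₐ[ℂ] B) (x : Fin n → A) (p : FreeAlgebra ℂ (Fin n × Bool)) :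
    f (evalStarPoly x p) = evalStarPoly (fun i => f (x i)) p := by
  have h : (f : A →ₐ[ℂ] B).comp
        (FreeAlgebra.lift ℂ fun q : Fin n × Bool => if q.2 then star (x q.1) else x q.1) =
      FreeAlgebra.lift ℂ fun q => if q.2 then star (f (x q.1)) else f (x q.1) :=
    FreeAlgebra.hom_ext <| funext fun q => by simp [apply_ite f, map_star]
  exact congr($h p)

lemma evalStarPoly_prodMk (x : Fin n → A) (y : Fin n → B) (p : FreeAlgebra ℂ (Fin n × Bool)) :
    evalStarPoly (fun i => (x i, y i)) p = (evalStarPoly x p, evalStarPoly y p) := by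
  ext
  · simpa using (map_evalStarPoly (StarAlgHom.fst ℂ A B) (fun i => (x i, y i)) p)
  · simpa using (map_evalStarPoly (StarAlgHom.snd ℂ A B) (fun i => (x i, y i)) p)

end evalStarPoly

namespace Matrix

variable {l m o u w : Type*} [Fintype l] [Fintype m] [Fintype o]

lemma trace_reindex {R : Type*} [AddCommMonoid R] (e : m ≃ o) (M : Matrix m m R) :
    trace (reindex e e M) = trace M :=
  e.symm.sum_comp fun i => M i i

variable {R : Type*} [CommSemiring R] [StarRing R] [DecidableEq l] [DecidableEq m] [DecidableEq o]

variable (m o R) in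
def blockDiagonalStarAlgHom : (o → Matrix m m R) →⋆ₐ[R] Matrix (m × o) (m × o) R :=
  { blockDiagonalRingHom m o R with
    commutes' := fun r => by
      simp [Algebra.algebraMap_eq_smul_one, blockDiagonal_smul]
    map_star' := fun M => (blockDiagonal_conjTranspose M).symm }

@[simp]
lemma blockDiagonalStarAlgHom_apply (M : o → Matrix m m R) :
    blockDiagonalStarAlgHom m o R M = blockDiagonal M :=
  rfl

variable (R) in
def reindexStarAlgEquiv (e : m ≃ o) : Matrix m m R ≃⋆ₐ[R] Matrix o o R :=
  { reindexAlgEquiv R R e with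
    map_star' := fun M => (conjTranspose_reindex e e M).symm
    map_smul' := map_smul (reindexAlgEquiv R R e) }

@[simp]
lemma reindexStarAlgEquiv_apply (e : m ≃ o) (M : Matrix m m R) :
    reindexStarAlgEquiv R e M = reindex e e M :=
  rfl

variable (l m u w R) in
def kroneckerPairBlocks :
    (Matrix l l R × Matrix m m R) →⋆ₐ[R] (u ⊕ w → Matrix (l × m) (l × m) R) where
  toFun P := Sum.elim (fun _ => P.1 ⊗ₖ 1) (fun _ => 1 ⊗ₖ P.2)
  map_one' := by ext (_ | _) : 1 <;> simp
  map_mul' P Q := by ext (_ | _) : 1 <;> simp [← mul_kronecker_mul]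
  map_zero' := by ext (_ | _) : 1 <;> simp
  map_add' P Q := by ext (_ | _) : 1 <;> simp [add_kronecker, kronecker_add]
  commutes' r := by
    ext (_ | _) : 1 <;> simp [Algebra.algebraMap_eq_smul_one, smul_kronecker, kronecker_smul]
  map_star' P := by ext (_ | _) : 1 <;> simp [star_eq_conjTranspose, conjTranspose_kronecker]

@[simp]
lemma kroneckerPairBlocks_apply (P : Matrix l l R × Matrix m m R) :
    kroneckerPairBlocks l m u w R P = Sum.elim (fun _ => P.1 ⊗ₖ 1) (fun _ => 1 ⊗ₖ P.2) :=
  rfl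

lemma kroneckerPairBlocks_injective [Nonempty l] [Nonempty m] [Nonempty u] [Nonempty w] :
    Function.Injective (kroneckerPairBlocks l m u w R) := by
  intro P Q h
  obtain ⟨i₀⟩ := ‹Nonempty l›
  obtain ⟨j₀⟩ := ‹Nonempty m›
  have h₁ := congrFun h (Sum.inl (Classical.arbitrary u))
  have h₂ := congrFun h (Sum.inr (Classical.arbitrary w))
  refine Prod.ext (ext fun a b => ?_) (ext fun a b => ?_)
  · simpa using congrFun₂ h₁ (a, j₀) (b, j₀)
  · simpa using congrFun₂ h₂ (i₀, a) (i₀, b)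

end Matrix

open Matrix

noncomputable def weightedBlockEmbedding (m₁ m₂ u w : ℕ) :
    (Matrix (Fin m₁) (Fin m₁) ℂ × Matrix (Fin m₂) (Fin m₂) ℂ) →⋆ₐ[ℂ]
      Matrix (Fin (m₁ * m₂ * (u + w))) (Fin (m₁ * m₂ * (u + w))) ℂ :=
  (reindexStarAlgEquiv ℂ
      ((finProdFinEquiv.prodCongr finSumFinEquiv).trans finProdFinEquiv)).toStarAlgHom.comp
    ((blockDiagonalStarAlgHom _ _ ℂ).comp (kroneckerPairBlocks _ _ (Fin u) (Fin w) ℂ))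

section weightedBlockEmbedding

variable {m₁ m₂ u w : ℕ}

lemma weightedBlockEmbedding_injective (hm₁ : 0 < m₁) (hm₂ : 0 < m₂) (hu : 0 < u) (hw : 0 < w) :
    Function.Injective (weightedBlockEmbedding m₁ m₂ u w) := by
  have := Fin.pos_iff_nonempty.mp hm₁
  have := Fin.pos_iff_nonempty.mp hm₂
  have := Fin.pos_iff_nonempty.mp hu
  have := Fin.pos_iff_nonempty.mp hw
  exact (reindexStarAlgEquiv ℂ _).injective.comp
    (blockDiagonal_injective.comp kroneckerPairBlocks_injective)

lemma norm_weightedBlockEmbedding (hm₁ : 0 < m₁) (hm₂ : 0 < m₂) (hu : 0 < u) (hw : 0 < w)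
    (P : Matrix (Fin m₁) (Fin m₁) ℂ × Matrix (Fin m₂) (Fin m₂) ℂ) :
    ‖weightedBlockEmbedding m₁ m₂ u w P‖ = max ‖P.1‖ ‖P.2‖ :=
  (NonUnitalStarAlgHom.norm_map _ (weightedBlockEmbedding_injective hm₁ hm₂ hu hw) P).trans
    (Prod.norm_def P)

lemma trace_weightedBlockEmbedding
    (P : Matrix (Fin m₁) (Fin m₁) ℂ × Matrix (Fin m₂) (Fin m₂) ℂ) :
    trace (weightedBlockEmbedding m₁ m₂ u w P) = u * m₂ * trace P.1 + w * m₁ * trace P.2 := by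
  simp only [weightedBlockEmbedding, StarAlgHom.comp_apply, StarAlgEquiv.toStarAlgHom_apply,
    reindexStarAlgEquiv_apply, blockDiagonalStarAlgHom_apply, kroneckerPairBlocks_apply,
    trace_reindex, trace_blockDiagonal, Fintype.sum_sum_type, Sum.elim_inl, Sum.elim_inr,
    trace_kronecker, trace_one, Fintype.card_fin, Finset.sum_const, Finset.card_univ, nsmul_eq_mul]
  ring

lemma trace_weightedBlockEmbedding_div (hm₁ : 0 < m₁) (hm₂ : 0 < m₂) (huw : 0 < u + w)
    (P : Matrix (Fin m₁) (Fin m₁) ℂ × Matrix (Fin m₂) (Fin m₂) ℂ) :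
    trace (weightedBlockEmbedding m₁ m₂ u w P) / (m₁ * m₂ * (u + w) : ℕ) =
      u / (u + w) * (trace P.1 / m₁) + w / (u + w) * (trace P.2 / m₂) := by
  have : (m₁ : ℂ) ≠ 0 := Nat.cast_ne_zero.mpr hm₁.ne'
  have : (m₂ : ℂ) ≠ 0 := Nat.cast_ne_zero.mpr hm₂.ne'
  have : (u + w : ℂ) ≠ 0 := by exact_mod_cast huw.ne'
  rw [trace_weightedBlockEmbedding]
  push_cast
  field_simp

end weightedBlockEmbedding

theorem IsMFTrace.convexCombination {A : Type*} [NormedRing A] [StarRing A] [CStarRing A]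
    [NormedAlgebra ℂ A] {n : ℕ} {x : Fin n → A} {τ ρ : A → ℂ}
    (hτ : IsMFTrace x τ) (hρ : IsMFTrace x ρ) {u w : ℕ} (hu : 0 < u) (hw : 0 < w) :
    IsMFTrace x fun a => u / (u + w) * τ a + w / (u + w) * ρ a := by
  obtain ⟨m₁, hm₁, X, hX⟩ := hτ
  obtain ⟨m₂, hm₂, Y, hY⟩ := hρ
  set Φ := fun k => weightedBlockEmbedding (m₁ k) (m₂ k) u w
  refine ⟨fun k => m₁ k * m₂ k * (u + w), fun k => by have := hm₁ k; have := hm₂ k; positivity,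
    fun k i => Φ k (X k i, Y k i), fun p => ?_⟩
  have heval : ∀ k, evalStarPoly (fun i => Φ k (X k i, Y k i)) p =
      Φ k (evalStarPoly (X k) p, evalStarPoly (Y k) p) := fun k => by
    rw [← evalStarPoly_prodMk, map_evalStarPoly]
  simp only [heval, Φ, norm_weightedBlockEmbedding (hm₁ _) (hm₂ _) hu hw,
    trace_weightedBlockEmbedding_div (hm₁ _) (hm₂ _) (Nat.add_pos_left hu w)]
  refine ⟨?_, ((hX p).2.const_mul _).add ((hY p).2.const_mul _)⟩
  simpa using (hX p).1.max (hY p).1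

lemma Rat.exists_eq_nat_div_add (q : ℚ) (hq₀ : 0 < q) (hq₁ : q < 1) :
    ∃ u w : ℕ, 0 < u ∧ 0 < w ∧ q = u / (u + w) := by
  have hnum : 0 < q.num := Rat.num_pos.mpr hq₀
  have hden : q.num < q.den := Rat.num_lt_denom_iff.mpr hq₁
  refine ⟨q.num.toNat, q.den - q.num.toNat, by omega, by omega, ?_⟩
  have hcast : ((q.num.toNat : ℕ) : ℚ) = q.num := by exact_mod_cast Int.toNat_of_nonneg hnum.le
  rw [Nat.cast_sub (by omega), add_sub_cancel, hcast, Rat.num_div_den]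

theorem stmt10_general {A : Type*}
    [NormedRing A] [StarRing A] [CStarRing A] [NormedAlgebra ℂ A]
    {n : ℕ} (x : Fin n → A)
    (τ ρ : A →ₗ[ℂ] ℂ)
    (hτ : IsMFTrace x (fun a => τ a)) (hρ : IsMFTrace x (fun a => ρ a))
    (q : ℚ) (hq0 : 0 ≤ q) (hq1 : q ≤ 1) :
    IsMFTrace x (fun a => (q : ℂ) * τ a + ((1 : ℂ) - (q : ℂ)) * ρ a) := by
  rcases hq0.eq_or_lt with rfl | hq_pos
  · simpa using hρ
  rcases hq1.eq_or_lt with rfl | hq_lt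
  · simpa using hτ
  obtain ⟨u, w, hu, hw, rfl⟩ := q.exists_eq_nat_div_add hq_pos hq_lt
  have huw : (u + w : ℂ) ≠ 0 := by exact_mod_cast (by omega : u + w ≠ 0)
  have hsub : 1 - (u / (u + w) : ℂ) = w / (u + w) := by field_simp; ring
  push_cast
  simpa only [hsub] using hτ.convexCombination hρ hu hw

/-- If `τ` and `ρ` are MF-traces (tracial states arising as weak* limits of
normalized matrix traces along topological-distribution-convergent microstate sequences
for a fixed generating tuple `x̄`), then for every rational `q ∈ [0,1]`, the tracial state
`q·τ + (1−q)·ρ` is again an MF-trace. -/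
theorem stmt10 {A : Type*}
    [NormedRing A] [StarRing A] [CStarRing A] [NormedAlgebra ℂ A] [CompleteSpace A]
    [StarModule ℂ A]
    {n : ℕ} (x : Fin n → A)
    (hgen : (StarAlgebra.adjoin ℂ (Set.range x)).topologicalClosure = ⊤)
    (τ ρ : A →ₗ[ℂ] ℂ)
    (hτstate : τ 1 = 1 ∧ (∀ a : A, 0 ≤ (τ (star a * a)).re ∧ (τ (star a * a)).im = 0) ∧
      ∀ a b : A, τ (a * b) = τ (b * a))
    (hρstate : ρ 1 = 1 ∧ (∀ a : A, 0 ≤ (ρ (star a * a)).re ∧ (ρ (star a * a)).im = 0) ∧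
      ∀ a b : A, ρ (a * b) = ρ (b * a))
    (hτ : IsMFTrace x (fun a => τ a)) (hρ : IsMFTrace x (fun a => ρ a))
    (q : ℚ) (hq0 : 0 ≤ q) (hq1 : q ≤ 1) :
    IsMFTrace x (fun a => (q : ℂ) * τ a + ((1 : ℂ) - (q : ℂ)) * ρ a) :=
  stmt10_general x τ ρ hτ hρ q hq0 hq1
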